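/- Let r ≤ n, let p_1, …, p_r be single-target pdfs, let b_1, …, b_{n−r} be single-target pdfs (the birth pdfs), let K be a single-target transition density, and let p⁻_i(y) = ∫_E K(y, x) p_i(x) dμ(x). Then for every Y = (y_1,…,y_n) ∈ E^n, (1/r!) ∫_{E^r} [∑_{ν ∈ Perm(Fin n)} ∏_{i=1}^r K(y_{ν(i)}, x_i) ∏_{i=r+1}^n b_{i−r}(y_{ν(i)})] · [∑_{μ ∈ Perm(Fin r)} ∏_{i=1}^r p_i(x_{μ(i)})] dμ^{⊗r}(x) = ∑_{ν ∈ Perm(Fin n)} ∏_{i=1}^r p⁻_i(y_{ν(i)}) ∏_{i=r+1}^n b_{i−r}(y_{ν(i)}). (Core identity in the proof of Proposition 4.) -/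

import Mathlib

open MeasureTheory
open scoped NNReal ENNReal

/-- Lintegral of a product of coordinate functions over a finite product measure. -/
lemma lintegral_pi_prod {E : Type*} [MeasurableSpace E] (μ : Measure E) [SigmaFinite μ] :
    ∀ (m : ℕ) (f : Fin m → E → ℝ≥0∞), (∀ i, Measurable (f i)) →
      ∫⁻ x : Fin m → E, ∏ i, f i (x i) ∂(Measure.pi fun _ : Fin m => μ)
        = ∏ i, ∫⁻ t, f i t ∂μ := by
  intro m
  induction m with
  | zero =>
      intro f _
      simp [lintegral_const, Measure.pi_univ]
  | succ m ih =>
      intro f hf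
      have hmp := (measurePreserving_piFinSuccAbove (fun _ : Fin (m + 1) => μ) 0)
      have hmeas : Measurable fun x : Fin (m + 1) → E => ∏ i, f i (x i) :=
        Finset.measurable_prod _ fun i _ => (hf i).comp (measurable_pi_apply i)
      have := hmp.symm (MeasurableEquiv.piFinSuccAbove (fun _ : Fin (m+1) => E) 0)
        |>.lintegral_comp hmeas
      rw [← this]
      have : ∀ (a : E) (z : Fin m → E),
          (∏ i, f i (((MeasurableEquiv.piFinSuccAbove (fun _ : Fin (m+1) => E) 0).symm
            (a, z)) i))
          = f 0 a * ∏ j, f j.succ (z j) := by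
        intro a z
        have hc : ((MeasurableEquiv.piFinSuccAbove (fun _ : Fin (m+1) => E) 0).symm
            (a, z)) = Fin.cons a z := by
          ext i
          simp only [MeasurableEquiv.piFinSuccAbove_symm_apply, MeasurableEquiv.symm_mk,
            MeasurableEquiv.coe_mk, Equiv.symm_symm, Fin.insertNthEquiv_apply]
          rw [Fin.insertNth_zero]
          rfl
        rw [hc, Fin.prod_univ_succ, Fin.cons_zero]
        simp
      calc ∫⁻ y : E × (Fin m → E),
              ∏ i, f i (((MeasurableEquiv.piFinSuccAbove (fun _ : Fin (m+1) => E) 0).symm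
                y) i) ∂(μ.prod (Measure.pi fun _ : Fin m => μ))
          = ∫⁻ y : E × (Fin m → E), f 0 y.1 * ∏ j, f j.succ (y.2 j)
              ∂(μ.prod (Measure.pi fun _ : Fin m => μ)) := by
            refine lintegral_congr fun y => ?_
            exact this y.1 y.2
        _ = (∫⁻ t, f 0 t ∂μ) *
              ∫⁻ z : Fin m → E, ∏ j, f j.succ (z j) ∂(Measure.pi fun _ : Fin m => μ) :=
            lintegral_prod_mul (hf 0).aemeasurable
              (Finset.measurable_prod _ fun (j : Fin m) _ =>
                (hf j.succ).comp (measurable_pi_apply j)).aemeasurable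
        _ = ∏ i, ∫⁻ t, f i t ∂μ := by
            rw [ih _ fun j => hf j.succ, Fin.prod_univ_succ]

/-- **Core identity in the proof of Proposition 4.**  For `r ≤ n`, single-target pdfs
`p 1, …, p r`, birth pdfs `b 1, …, b (n−r)`, a single-target transition density `K`, and
predicted pdfs `p⁻ i y = ∫ K(y,x) pᵢ(x) dμ(x)`, for every `Y ∈ Eⁿ`:
`(1/r!) ∫_{E^r} [∑_{ν ∈ Perm(Fin n)} ∏_{i≤r} K(y_{ν i}, xᵢ) ∏_{r<i≤n} b_{i−r}(y_{ν i})]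
    [∑_{μ ∈ Perm(Fin r)} ∏ᵢ pᵢ(x_{μ i})] dμ^{⊗r}(x)
  = ∑_{ν ∈ Perm(Fin n)} ∏_{i≤r} p⁻ᵢ(y_{ν i}) ∏_{r<i≤n} b_{i−r}(y_{ν i})`. -/
theorem fisst_birth_prediction_core
    {E : Type*} [MeasurableSpace E] (μ : Measure E) [SigmaFinite μ]
    (r n : ℕ) (hrn : r ≤ n)
    (p : Fin r → E → ℝ≥0)
    (hpm : ∀ i, Measurable (p i))
    (hp1 : ∀ i, ∫⁻ x, (p i x : ℝ≥0∞) ∂μ = 1)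
    (b : Fin (n - r) → E → ℝ≥0)
    (hbm : ∀ j, Measurable (b j))
    (hb1 : ∀ j, ∫⁻ y, (b j y : ℝ≥0∞) ∂μ = 1)
    (K : E → E → ℝ≥0) (hKm : Measurable (Function.uncurry K))
    (hK1 : ∀ x, ∫⁻ y, (K y x : ℝ≥0∞) ∂μ = 1)
    (ppred : Fin r → E → ℝ≥0∞)
    (hppred : ∀ i y, ppred i y = ∫⁻ x, (K y x : ℝ≥0∞) * (p i x : ℝ≥0∞) ∂μ)
    (Y : Fin n → E) :
    (∫⁻ x : Fin r → E,
        (∑ ν : Equiv.Perm (Fin n),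
          (∏ i : Fin r, (K (Y (ν (Fin.castLE hrn i))) (x i) : ℝ≥0∞)) *
            ∏ j : Fin (n - r),
              (b j (Y (ν ⟨r + (j : ℕ), by have := j.isLt; omega⟩)) : ℝ≥0∞)) *
          (∑ σ : Equiv.Perm (Fin r), ∏ i, (p i (x (σ i)) : ℝ≥0∞))
        ∂(Measure.pi fun _ : Fin r => μ)) / (Nat.factorial r : ℝ≥0∞) =
      ∑ ν : Equiv.Perm (Fin n),
        (∏ i : Fin r, ppred i (Y (ν (Fin.castLE hrn i)))) *
          ∏ j : Fin (n - r),
            (b j (Y (ν ⟨r + (j : ℕ), by have := j.isLt; omega⟩)) : ℝ≥0∞) := by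
  classical
  -- abbreviations
  set Cb : Equiv.Perm (Fin n) → ℝ≥0∞ := fun ν =>
    ∏ j : Fin (n - r), (b j (Y (ν ⟨r + (j : ℕ), by have := j.isLt; omega⟩)) : ℝ≥0∞) with hCb
  have hKc : ∀ c : E, Measurable fun t => (K c t : ℝ≥0∞) := fun c =>
    measurable_coe_nnreal_ennreal.comp (hKm.comp (measurable_const.prodMk measurable_id))
  -- Step 1: expand the product of sums and swap the integral with the sums.
  have hterm : ∀ (ν : Equiv.Perm (Fin n)) (σ : Equiv.Perm (Fin r)),
      ∫⁻ x : Fin r → E,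
          ((∏ i : Fin r, (K (Y (ν (Fin.castLE hrn i))) (x i) : ℝ≥0∞)) * Cb ν) *
            ∏ i, (p i (x (σ i)) : ℝ≥0∞) ∂(Measure.pi fun _ : Fin r => μ)
        = (∏ i : Fin r, ppred i (Y (ν (Fin.castLE hrn (σ i))))) * Cb ν := by
    intro ν σ
    have hre : ∀ x : Fin r → E,
        (∏ i, (p i (x (σ i)) : ℝ≥0∞)) = ∏ i, (p (σ⁻¹ i) (x i) : ℝ≥0∞) := by
      intro x
      rw [← Equiv.prod_comp σ (fun i => (p (σ⁻¹ i) (x i) : ℝ≥0∞))]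
      simp
    calc ∫⁻ x : Fin r → E,
            ((∏ i : Fin r, (K (Y (ν (Fin.castLE hrn i))) (x i) : ℝ≥0∞)) * Cb ν) *
              ∏ i, (p i (x (σ i)) : ℝ≥0∞) ∂(Measure.pi fun _ : Fin r => μ)
        = ∫⁻ x : Fin r → E,
            (∏ i : Fin r, (K (Y (ν (Fin.castLE hrn i))) (x i) : ℝ≥0∞) *
              (p (σ⁻¹ i) (x i) : ℝ≥0∞)) * Cb ν ∂(Measure.pi fun _ : Fin r => μ) := by
          refine lintegral_congr fun x => ?_
          rw [hre x, Finset.prod_mul_distrib]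
          ring
      _ = ((∏ i : Fin r, ∫⁻ t, (K (Y (ν (Fin.castLE hrn i))) t : ℝ≥0∞) *
              (p (σ⁻¹ i) t : ℝ≥0∞) ∂μ)) * Cb ν := by
          rw [lintegral_mul_const' _ _ (by simp [hCb, ENNReal.prod_ne_top])]
          congr 1
          exact lintegral_pi_prod μ r
            (fun i t => (K (Y (ν (Fin.castLE hrn i))) t : ℝ≥0∞) * (p (σ⁻¹ i) t : ℝ≥0∞))
            fun i => (hKc _).mul (measurable_coe_nnreal_ennreal.comp (hpm _))
      _ = (∏ i : Fin r, ppred (σ⁻¹ i) (Y (ν (Fin.castLE hrn i)))) * Cb ν := by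
          simp_rw [hppred]
      _ = (∏ i : Fin r, ppred i (Y (ν (Fin.castLE hrn (σ i))))) * Cb ν := by
          congr 1
          rw [← Equiv.prod_comp σ (fun i => ppred (σ⁻¹ i) (Y (ν (Fin.castLE hrn i))))]
          simp
  -- permutation invariance: for each σ the inner ν-sum equals the target sum
  have hperm : ∀ σ : Equiv.Perm (Fin r),
      (∑ ν : Equiv.Perm (Fin n),
          (∏ i : Fin r, ppred i (Y (ν (Fin.castLE hrn (σ i))))) * Cb ν)
        = ∑ ν : Equiv.Perm (Fin n),
            (∏ i : Fin r, ppred i (Y (ν (Fin.castLE hrn i)))) * Cb ν := by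
    intro σ
    set e : Fin r ≃ {i : Fin n // (i : ℕ) < r} :=
      { toFun := fun i => ⟨Fin.castLE hrn i, i.isLt⟩
        invFun := fun j => ⟨(j : Fin n), j.2⟩
        left_inv := fun i => by ext; simp
        right_inv := fun j => by ext; simp } with he
    set τ : Equiv.Perm (Fin n) := σ.extendDomain e with hτ
    have hτ1 : ∀ i : Fin r, τ (Fin.castLE hrn i) = Fin.castLE hrn (σ i) := by
      intro i
      have := Equiv.Perm.extendDomain_apply_image σ e i
      simpa [he] using this
    have hτ2 : ∀ j : Fin (n - r), (hj : r + (j : ℕ) < n) → τ ⟨r + (j : ℕ), hj⟩ = ⟨r + (j : ℕ), hj⟩ := by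
      intro j hj
      exact Equiv.Perm.extendDomain_apply_not_subtype σ e (by simp)
    calc (∑ ν : Equiv.Perm (Fin n),
            (∏ i : Fin r, ppred i (Y (ν (Fin.castLE hrn (σ i))))) * Cb ν)
        = ∑ ν : Equiv.Perm (Fin n),
            (∏ i : Fin r, ppred i (Y ((ν * τ) (Fin.castLE hrn i)))) * Cb (ν * τ) := by
          refine Finset.sum_congr rfl fun ν _ => ?_
          congr 1
          · refine Finset.prod_congr rfl fun i _ => ?_
            rw [Equiv.Perm.mul_apply, hτ1]
          · refine Finset.prod_congr rfl fun j _ => ?_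
            rw [Equiv.Perm.mul_apply, hτ2]
      _ = ∑ ν : Equiv.Perm (Fin n),
            (∏ i : Fin r, ppred i (Y (ν (Fin.castLE hrn i)))) * Cb ν :=
          Fintype.sum_equiv (Equiv.mulRight τ) _ _ (fun ν => rfl)
  -- main computation
  have hmeasterm : ∀ (ν : Equiv.Perm (Fin n)) (σ : Equiv.Perm (Fin r)),
      Measurable fun x : Fin r → E =>
        ((∏ i : Fin r, (K (Y (ν (Fin.castLE hrn i))) (x i) : ℝ≥0∞)) * Cb ν) *
          ∏ i, (p i (x (σ i)) : ℝ≥0∞) := by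
    intro ν σ
    exact ((Finset.measurable_prod _ fun i _ =>
        (hKc _).comp (measurable_pi_apply i)).mul_const _).mul
      (Finset.measurable_prod _ fun i _ =>
        (measurable_coe_nnreal_ennreal.comp (hpm i)).comp (measurable_pi_apply (σ i)))
  have hint : (∫⁻ x : Fin r → E,
        (∑ ν : Equiv.Perm (Fin n),
          (∏ i : Fin r, (K (Y (ν (Fin.castLE hrn i))) (x i) : ℝ≥0∞)) * Cb ν) *
          (∑ σ : Equiv.Perm (Fin r), ∏ i, (p i (x (σ i)) : ℝ≥0∞))
        ∂(Measure.pi fun _ : Fin r => μ))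
      = (Nat.factorial r : ℝ≥0∞) *
          ∑ ν : Equiv.Perm (Fin n),
            (∏ i : Fin r, ppred i (Y (ν (Fin.castLE hrn i)))) * Cb ν := by
    calc (∫⁻ x : Fin r → E,
          (∑ ν : Equiv.Perm (Fin n),
            (∏ i : Fin r, (K (Y (ν (Fin.castLE hrn i))) (x i) : ℝ≥0∞)) * Cb ν) *
            (∑ σ : Equiv.Perm (Fin r), ∏ i, (p i (x (σ i)) : ℝ≥0∞))
          ∂(Measure.pi fun _ : Fin r => μ))
        = ∫⁻ x : Fin r → E,
            ∑ ν : Equiv.Perm (Fin n), ∑ σ : Equiv.Perm (Fin r),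
              ((∏ i : Fin r, (K (Y (ν (Fin.castLE hrn i))) (x i) : ℝ≥0∞)) * Cb ν) *
                ∏ i, (p i (x (σ i)) : ℝ≥0∞)
            ∂(Measure.pi fun _ : Fin r => μ) := by
          refine lintegral_congr fun x => ?_
          rw [Finset.sum_mul_sum]
      _ = ∑ ν : Equiv.Perm (Fin n), ∑ σ : Equiv.Perm (Fin r),
            ∫⁻ x : Fin r → E,
              ((∏ i : Fin r, (K (Y (ν (Fin.castLE hrn i))) (x i) : ℝ≥0∞)) * Cb ν) *
                ∏ i, (p i (x (σ i)) : ℝ≥0∞) ∂(Measure.pi fun _ : Fin r => μ) := by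
          rw [lintegral_finset_sum _ fun ν _ =>
            Finset.measurable_sum _ fun σ _ => hmeasterm ν σ]
          exact Finset.sum_congr rfl fun ν _ =>
            lintegral_finset_sum _ fun σ _ => hmeasterm ν σ
      _ = ∑ σ : Equiv.Perm (Fin r), ∑ ν : Equiv.Perm (Fin n),
            (∏ i : Fin r, ppred i (Y (ν (Fin.castLE hrn (σ i))))) * Cb ν := by
          rw [Finset.sum_comm]
          exact Finset.sum_congr rfl fun σ _ =>
            Finset.sum_congr rfl fun ν _ => hterm ν σ
      _ = ∑ _σ : Equiv.Perm (Fin r), ∑ ν : Equiv.Perm (Fin n),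
            (∏ i : Fin r, ppred i (Y (ν (Fin.castLE hrn i)))) * Cb ν :=
          Finset.sum_congr rfl fun σ _ => hperm σ
      _ = (Nat.factorial r : ℝ≥0∞) *
            ∑ ν : Equiv.Perm (Fin n),
              (∏ i : Fin r, ppred i (Y (ν (Fin.castLE hrn i)))) * Cb ν := by
          rw [Finset.sum_const, Finset.card_univ, Fintype.card_perm, Fintype.card_fin,
            nsmul_eq_mul]
  rw [hint]
  exact ((ENNReal.eq_div_iff (by exact_mod_cast (Nat.factorial_pos r).ne')
    (ENNReal.natCast_ne_top _)).mpr rfl).symm
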